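/- Fix a real number r > 0 and real parameters f₁, f₂, c₀, c₁, c₂, and define for s ∈ (−r, r): P(s) = f₁s + f₂√(r² − s²), Q(s) = c₀ + c₂s² + c₁s√(r² − s²), D(s) = √(r² − s²)(f₁s² − 2c₀(r² − s²) + 1) + c₁r²s³ + f₂(r² − s²)s − c₁r⁴s, and h(s) = [s√(r² − s²)(2c₀ + f₁) + 2f₂r² + (c₁r² − f₂)s²]/D(s). Then at every s ∈ (−r, r) with D(s) ≠ 0 the following identity holds (primes denote d/ds): (r² − s²)·[3h·P″ + P‴ + (s + (r² − s²)h)·Q‴] + 3·[−s·P″ + h·(P − sP′) + (s + (r² − s²)h)·(Q′ − sQ″)] = 0. -/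

import Mathlib

/-!
On `|s| < r` put `w = √(r² − s²)`, so that `w² = r² − s²` and `w' = -s / w`. Every
derivative of `P` and `Q` is then `a + b / w ^ k` with `a`, `b` polynomial in `s`, by the single
rule `(p / w ^ k)' = (p' w² + k s p) / w ^ (k + 2)`. Substituting `r² = w² + s²` turns the
Landsberg expression into a rational function of the independent quantities `s`, `w`, and it
vanishes identically once the denominators `w⁵` and `D` are cleared.
-/

open Real Set

section SqrtSqSub

variable {r s : ℝ}

lemma sq_sub_sq_pos_of_mem_Ioo (hs : s ∈ Ioo (-r) r) : 0 < r ^ 2 - s ^ 2 := by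
  nlinarith [hs.1, hs.2]

lemma hasDerivAt_sqrt_sq_sub (hs : 0 < r ^ 2 - s ^ 2) :
    HasDerivAt (fun t => √(r ^ 2 - t ^ 2)) (-s / √(r ^ 2 - s ^ 2)) s :=
  ((((hasDerivAt_id' s).fun_pow 2).const_sub (r ^ 2)).sqrt hs.ne').congr_deriv
    (by field_simp; push_cast; ring)

lemma HasDerivAt.div_sqrt_sq_sub_pow {p : ℝ → ℝ} {p' : ℝ} (hp : HasDerivAt p p' s)
    (hs : 0 < r ^ 2 - s ^ 2) (k : ℕ) :
    HasDerivAt (fun t => p t / √(r ^ 2 - t ^ 2) ^ k)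
      ((p' * (r ^ 2 - s ^ 2) + k * s * p s) / √(r ^ 2 - s ^ 2) ^ (k + 2)) s := by
  have hw : 0 < √(r ^ 2 - s ^ 2) := sqrt_pos.2 hs
  have hw2 := sq_sqrt hs.le
  refine (hp.div ((hasDerivAt_sqrt_sq_sub hs).fun_pow k) (pow_ne_zero k hw.ne')).congr_deriv ?_
  set w := √(r ^ 2 - s ^ 2)
  rw [← hw2]
  rcases k with _ | k
  · simp only [pow_zero, CharP.cast_eq_zero, zero_mul, mul_zero, add_zero, sub_zero]
    field_simp
  · field_simp
    push_cast
    ring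

variable (f₁ f₂ c₀ c₁ c₂ : ℝ)

lemma hasDerivAt_P (hs : 0 < r ^ 2 - s ^ 2) :
    HasDerivAt (fun t => f₁ * t + f₂ * √(r ^ 2 - t ^ 2)) (f₁ - f₂ * s / √(r ^ 2 - s ^ 2)) s :=
  (((hasDerivAt_id' s).const_mul f₁).fun_add ((hasDerivAt_sqrt_sq_sub hs).const_mul f₂)).congr_deriv
    (by ring)

lemma hasDerivAt_P' (hs : 0 < r ^ 2 - s ^ 2) :
    HasDerivAt (fun t => f₁ - f₂ * t / √(r ^ 2 - t ^ 2)) (-f₂ * r ^ 2 / √(r ^ 2 - s ^ 2) ^ 3) s := by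
  simpa only [pow_one] using
    ((((hasDerivAt_id' s).const_mul f₂).div_sqrt_sq_sub_pow hs 1).const_sub f₁).congr_deriv
      (by push_cast; ring)

lemma hasDerivAt_P'' (hs : 0 < r ^ 2 - s ^ 2) :
    HasDerivAt (fun t => -f₂ * r ^ 2 / √(r ^ 2 - t ^ 2) ^ 3)
      (-3 * f₂ * r ^ 2 * s / √(r ^ 2 - s ^ 2) ^ 5) s :=
  ((hasDerivAt_const s (-f₂ * r ^ 2)).div_sqrt_sq_sub_pow hs 3).congr_deriv (by push_cast; ring)

lemma hasDerivAt_Q (hs : 0 < r ^ 2 - s ^ 2) :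
    HasDerivAt (fun t => c₀ + c₂ * t ^ 2 + c₁ * t * √(r ^ 2 - t ^ 2))
      (2 * c₂ * s + c₁ * (r ^ 2 - 2 * s ^ 2) / √(r ^ 2 - s ^ 2)) s := by
  have hw : 0 < √(r ^ 2 - s ^ 2) := sqrt_pos.2 hs
  refine (((hasDerivAt_const s c₀).fun_add ((hasDerivAt_pow 2 s).const_mul c₂)).fun_add
    (((hasDerivAt_id' s).const_mul c₁).fun_mul (hasDerivAt_sqrt_sq_sub hs))).congr_deriv ?_
  have hw2 := sq_sqrt hs.le
  set w := √(r ^ 2 - s ^ 2)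
  rw [show r ^ 2 = w ^ 2 + s ^ 2 by linarith]
  field_simp
  ring

lemma hasDerivAt_Q' (hs : 0 < r ^ 2 - s ^ 2) :
    HasDerivAt (fun t => 2 * c₂ * t + c₁ * (r ^ 2 - 2 * t ^ 2) / √(r ^ 2 - t ^ 2))
      (2 * c₂ + c₁ * s * (2 * s ^ 2 - 3 * r ^ 2) / √(r ^ 2 - s ^ 2) ^ 3) s := by
  have hnum := (((hasDerivAt_pow 2 s).const_mul 2).const_sub (r ^ 2)).const_mul c₁
  simpa only [pow_one] using
    (((hasDerivAt_id' s).const_mul (2 * c₂)).fun_add (hnum.div_sqrt_sq_sub_pow hs 1)).congr_deriv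
      (by push_cast; ring)

lemma hasDerivAt_Q'' (hs : 0 < r ^ 2 - s ^ 2) :
    HasDerivAt (fun t => 2 * c₂ + c₁ * t * (2 * t ^ 2 - 3 * r ^ 2) / √(r ^ 2 - t ^ 2) ^ 3)
      (-3 * c₁ * r ^ 4 / √(r ^ 2 - s ^ 2) ^ 5) s := by
  have hnum := ((hasDerivAt_id' s).const_mul c₁).fun_mul
    (((hasDerivAt_pow 2 s).const_mul 2).sub_const (3 * r ^ 2))
  exact ((hasDerivAt_const s (2 * c₂)).fun_add (hnum.div_sqrt_sq_sub_pow hs 3)).congr_deriv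
    (by push_cast; ring)

end SqrtSqSub

lemma landsberg_eq_zero_of_derivs {r s f₁ f₂ c₀ c₁ c₂ P₀ P₁ P₂ P₃ Q₁ Q₂ Q₃ D h : ℝ}
    (hs : 0 < r ^ 2 - s ^ 2)
    (hP₀ : P₀ = f₁ * s + f₂ * √(r ^ 2 - s ^ 2))
    (hP₁ : P₁ = f₁ - f₂ * s / √(r ^ 2 - s ^ 2))
    (hP₂ : P₂ = -f₂ * r ^ 2 / √(r ^ 2 - s ^ 2) ^ 3)
    (hP₃ : P₃ = -3 * f₂ * r ^ 2 * s / √(r ^ 2 - s ^ 2) ^ 5)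
    (hQ₁ : Q₁ = 2 * c₂ * s + c₁ * (r ^ 2 - 2 * s ^ 2) / √(r ^ 2 - s ^ 2))
    (hQ₂ : Q₂ = 2 * c₂ + c₁ * s * (2 * s ^ 2 - 3 * r ^ 2) / √(r ^ 2 - s ^ 2) ^ 3)
    (hQ₃ : Q₃ = -3 * c₁ * r ^ 4 / √(r ^ 2 - s ^ 2) ^ 5)
    (hD : D = √(r ^ 2 - s ^ 2) * (f₁ * s ^ 2 - 2 * c₀ * (r ^ 2 - s ^ 2) + 1)
      + c₁ * r ^ 2 * s ^ 3 + f₂ * (r ^ 2 - s ^ 2) * s - c₁ * r ^ 4 * s)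
    (hD₀ : D ≠ 0)
    (hh : h = (s * √(r ^ 2 - s ^ 2) * (2 * c₀ + f₁) + 2 * f₂ * r ^ 2
      + (c₁ * r ^ 2 - f₂) * s ^ 2) / D) :
    (r ^ 2 - s ^ 2) * (3 * h * P₂ + P₃ + (s + (r ^ 2 - s ^ 2) * h) * Q₃)
      + 3 * (-s * P₂ + h * (P₀ - s * P₁) + (s + (r ^ 2 - s ^ 2) * h) * (Q₁ - s * Q₂)) = 0 := by
  have hw : 0 < √(r ^ 2 - s ^ 2) := sqrt_pos.2 hs
  have hw2 := sq_sqrt hs.le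
  subst hP₀ hP₁ hP₂ hP₃ hQ₁ hQ₂ hQ₃ hh hD
  set w := √(r ^ 2 - s ^ 2)
  rw [show r ^ 4 = (r ^ 2) ^ 2 by ring, show r ^ 2 = w ^ 2 + s ^ 2 by linarith] at hD₀ ⊢
  field_simp
  ring

theorem stmt_8_general (r : ℝ) (f₁ f₂ c₀ c₁ c₂ : ℝ) (P Q D h : ℝ → ℝ)
    (hP : ∀ s, P s = f₁ * s + f₂ * Real.sqrt (r ^ 2 - s ^ 2))
    (hQ : ∀ s, Q s = c₀ + c₂ * s ^ 2 + c₁ * s * Real.sqrt (r ^ 2 - s ^ 2))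
    (hD : ∀ s, D s = Real.sqrt (r ^ 2 - s ^ 2) * (f₁ * s ^ 2 - 2 * c₀ * (r ^ 2 - s ^ 2) + 1)
      + c₁ * r ^ 2 * s ^ 3 + f₂ * (r ^ 2 - s ^ 2) * s - c₁ * r ^ 4 * s)
    (hh : ∀ s, h s = (s * Real.sqrt (r ^ 2 - s ^ 2) * (2 * c₀ + f₁) + 2 * f₂ * r ^ 2
      + (c₁ * r ^ 2 - f₂) * s ^ 2) / D s) :
    ∀ s ∈ Set.Ioo (-r) r, D s ≠ 0 →
      (r ^ 2 - s ^ 2) *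
          (3 * h s * deriv (deriv P) s + deriv (deriv (deriv P)) s
            + (s + (r ^ 2 - s ^ 2) * h s) * deriv (deriv (deriv Q)) s)
        + 3 * (-s * deriv (deriv P) s + h s * (P s - s * deriv P s)
            + (s + (r ^ 2 - s ^ 2) * h s) * (deriv Q s - s * deriv (deriv Q) s)) = 0 := by
  obtain rfl : P = _ := funext hP
  obtain rfl : Q = _ := funext hQ
  have hU : IsOpen (Ioo (-r) r) := isOpen_Ioo
  have hpos {t : ℝ} (ht : t ∈ Ioo (-r) r) := sq_sub_sq_pos_of_mem_Ioo ht
  have hP₁ : EqOn (deriv _) _ (Ioo (-r) r) := fun t ht => (hasDerivAt_P f₁ f₂ (hpos ht)).deriv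
  have hP₂ := (hP₁.deriv hU).trans fun t ht => (hasDerivAt_P' f₁ f₂ (hpos ht)).deriv
  have hP₃ := (hP₂.deriv hU).trans fun t ht => (hasDerivAt_P'' f₂ (hpos ht)).deriv
  have hQ₁ : EqOn (deriv _) _ (Ioo (-r) r) := fun t ht => (hasDerivAt_Q c₀ c₁ c₂ (hpos ht)).deriv
  have hQ₂ := (hQ₁.deriv hU).trans fun t ht => (hasDerivAt_Q' c₁ c₂ (hpos ht)).deriv
  have hQ₃ := (hQ₂.deriv hU).trans fun t ht => (hasDerivAt_Q'' c₁ c₂ (hpos ht)).deriv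
  intro s hs hDs
  exact landsberg_eq_zero_of_derivs (hpos hs) rfl (hP₁ hs) (hP₂ hs) (hP₃ hs) (hQ₁ hs) (hQ₂ hs)
    (hQ₃ hs) (hD s) hDs (hh s)

/-- main computation of Theorem 2.7: with
`P = f₁s + f₂√(r² − s²)`, `Q = c₀ + c₂s² + c₁s√(r² − s²)` and
`h = φ_s/φ` given by the displayed rational expression, the Landsberg equation
`(r² − s²)[3hP″ + P‴ + (s + (r² − s²)h)Q‴] + 3[−sP″ + h(P − sP′) + (s + (r² − s²)h)(Q′ − sQ″)] = 0`
holds wherever `D ≠ 0`. -/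
theorem stmt_8 (r : ℝ) (hr : 0 < r) (f₁ f₂ c₀ c₁ c₂ : ℝ) (P Q D h : ℝ → ℝ)
    (hP : ∀ s, P s = f₁ * s + f₂ * Real.sqrt (r ^ 2 - s ^ 2))
    (hQ : ∀ s, Q s = c₀ + c₂ * s ^ 2 + c₁ * s * Real.sqrt (r ^ 2 - s ^ 2))
    (hD : ∀ s, D s = Real.sqrt (r ^ 2 - s ^ 2) * (f₁ * s ^ 2 - 2 * c₀ * (r ^ 2 - s ^ 2) + 1)
      + c₁ * r ^ 2 * s ^ 3 + f₂ * (r ^ 2 - s ^ 2) * s - c₁ * r ^ 4 * s)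
    (hh : ∀ s, h s = (s * Real.sqrt (r ^ 2 - s ^ 2) * (2 * c₀ + f₁) + 2 * f₂ * r ^ 2
      + (c₁ * r ^ 2 - f₂) * s ^ 2) / D s) :
    ∀ s ∈ Set.Ioo (-r) r, D s ≠ 0 →
      (r ^ 2 - s ^ 2) *
          (3 * h s * deriv (deriv P) s + deriv (deriv (deriv P)) s
            + (s + (r ^ 2 - s ^ 2) * h s) * deriv (deriv (deriv Q)) s)
        + 3 * (-s * deriv (deriv P) s + h s * (P s - s * deriv P s)
            + (s + (r ^ 2 - s ^ 2) * h s) * (deriv Q s - s * deriv (deriv Q) s)) = 0 :=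
  stmt_8_general r f₁ f₂ c₀ c₁ c₂ P Q D h hP hQ hD hh
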